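/- arXiv:1406.3263 — 2 statements merged into one kernel-verified Lean document; each statement's English description precedes it below -/
import Mathlib

section
/- Suppose that for each k ∈ {1,…,s} there exist finite words (η_1,…,η_P) ∈ {1,…,m}^P and (ω_1,…,ω_Q) ∈ {1,…,m}^Q such that T_{η_1…η_P}(a_k) ∈ ⋃_{i=1}^s (a_i, b_i) and T_{ω_1…ω_Q}(b_k) ∈ ⋃_{i=1}^s (a_i, b_i). Then Ũ is a subshift of finite type. -/
open Filter Topology Set

/-- `ifsIter m f i n = f_{i₁} ∘ ⋯ ∘ f_{iₙ} (0)`. -/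
noncomputable def ifsIter (m : ℕ) (f : Fin m → ℝ → ℝ) : (ℕ → Fin m) → ℕ → ℝ
  | _, 0 => 0
  | i, n + 1 => f (i 0) (ifsIter m f (fun k => i (k + 1)) n)

/-- Apply `T_{i₁…i_N}` (i.e. `T_{i_N} ∘ ⋯ ∘ T_{i₁}`) to `x`. -/
noncomputable def invIterWord (m : ℕ) (T : Fin m → ℝ → ℝ) (w : List (Fin m)) (x : ℝ) : ℝ :=
  w.foldl (fun y j => T j y) x

/-!
Off the overlap set `S = ⋃ₖ Hₖ` a point lies in exactly one first-level interval `f_j(K)`, which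
forces the first letter of its coding, while at a point of `S` that letter can be switched. Hence
`Ũ` is the set of codings `i` all of whose shifted points `π(σⁿ i)` avoid `S`.

Each `T_j` maps the complement of the interior of `K` into itself, so if `T_w e` lies in the
interior of `S`, the whole orbit of `e` along `w` stays in the interior of `K`. Near such an orbit
point a coding avoiding `S` is forced to use the next letter of `w`, so by induction along `w` no
coding avoiding `S` projects close to `e`. By the hypothesis this covers the endpoints of every
`Hₖ`, so `π(Ũ)` keeps a positive distance `δ` from the compact set `S`. Two codings sharing their
first `L` letters have projections within `ρᴸ diam K < δ`, so if `π(σⁿ i) ∈ S` then no coding in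
`Ũ` starts with the `L` letters of `i` from position `n`. The forbidden words are the words of
length `L` whose cylinder misses `Ũ`.
-/

open Metric
open scoped NNReal

theorem exists_lipschitzWith_lt_one_of_finite {ι α β : Type*} [Finite ι]
    [PseudoEMetricSpace α] [PseudoEMetricSpace β] {g : ι → α → β}
    (h : ∀ j, ∃ K < 1, LipschitzWith K (g j)) :
    ∃ K < 1, ∀ j, LipschitzWith K (g j) := by
  have := Fintype.ofFinite ι
  choose K hK hg using h
  exact ⟨Finset.univ.sup K, (Finset.sup_lt_iff zero_lt_one).2 fun j _ => hK j,
    fun j => (hg j).weaken (Finset.le_sup (Finset.mem_univ j))⟩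

theorem lipschitzWith_affine (r c : ℝ) : LipschitzWith ‖r‖₊ fun x => r * x + c :=
  LipschitzWith.of_dist_le_mul fun x y => by
    rw [Real.dist_eq, Real.dist_eq, coe_nnnorm, Real.norm_eq_abs, ← abs_mul]
    exact (congrArg abs (by ring)).le

theorem exists_lipschitzWith_lt_one_of_affine {m : ℕ} {r c : Fin m → ℝ}
    (hr : ∀ j, 0 < r j ∧ r j < 1) {f : Fin m → ℝ → ℝ}
    (hf : ∀ j x, f j x = r j * x + c j) :
    ∃ ρ < 1, ∀ j, LipschitzWith ρ (f j) :=
  exists_lipschitzWith_lt_one_of_finite fun j => ⟨‖r j‖₊, by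
    rw [← NNReal.coe_lt_coe, coe_nnnorm, Real.norm_eq_abs, abs_of_pos (hr j).1]
    exact (hr j).2,
    funext (hf j) ▸ lipschitzWith_affine (r j) (c j)⟩

theorem mapsTo_of_eq_iUnion_image {ι α : Type*} {g : ι → α → α} {K : Set α}
    (hK : K = ⋃ j, g j '' K) (j : ι) : MapsTo (g j) K K :=
  mapsTo_iff_image_subset.2 ((subset_iUnion (fun j => g j '' K) j).trans hK.ge)

theorem infDist_le_mul_infDist {α : Type*} [PseudoMetricSpace α] {g : α → α} {K : ℝ≥0}
    (hg : LipschitzWith K g) {s : Set α} (hs : MapsTo g s s) (hne : s.Nonempty) (x : α) :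
    infDist (g x) s ≤ K * infDist x s := by
  have := hne.to_subtype
  rw [infDist_eq_iInf (x := x), Real.mul_iInf_of_nonneg (NNReal.coe_nonneg K)]
  exact le_ciInf fun y => (infDist_le_dist_of_mem (hs y.2)).trans (hg.dist_le_mul x y)

section CodingMap

variable {m : ℕ} {f : Fin m → ℝ → ℝ} {proj : Stream' (Fin m) → ℝ} {ρ : ℝ≥0}

theorem proj_eq_apply_proj_tail (hf : ∀ j, Continuous (f j))
    (hproj : ∀ i, Tendsto (ifsIter m f i) atTop (𝓝 (proj i))) (i : Stream' (Fin m)) :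
    proj i = f i.head (proj i.tail) :=
  tendsto_nhds_unique ((hproj i).comp (tendsto_add_atTop_nat 1))
    (((hf i.head).tendsto _).comp (hproj i.tail))

theorem mem_of_tendsto_ifsIter (hf : ∀ j, LipschitzWith ρ (f j)) (hρ : ρ < 1) {K : Set ℝ}
    (hK : IsClosed K) (hne : K.Nonempty) (hmaps : ∀ j, MapsTo (f j) K K) {i : ℕ → Fin m}
    {x : ℝ} (hx : Tendsto (ifsIter m f i) atTop (𝓝 x)) : x ∈ K := by
  have hbound : ∀ n i, infDist (ifsIter m f i n) K ≤ ρ ^ n * infDist 0 K := by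
    intro n
    induction n with
    | zero => simp [ifsIter]
    | succ n ih =>
      intro i
      calc infDist (f (i 0) (ifsIter m f (fun k => i (k + 1)) n)) K
          ≤ ρ * infDist (ifsIter m f (fun k => i (k + 1)) n) K :=
            infDist_le_mul_infDist (hf _) (hmaps _) hne _
        _ ≤ ρ * (ρ ^ n * infDist 0 K) := by gcongr; exact ih _
        _ = ρ ^ (n + 1) * infDist 0 K := by ring
  have hlim : Tendsto (fun n => (ρ : ℝ) ^ n * infDist 0 K) atTop (𝓝 0) := by
    simpa using (tendsto_pow_atTop_nhds_zero_of_lt_one ρ.2 hρ).mul_const (infDist 0 K)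
  have hx0 : infDist x K ≤ 0 :=
    le_of_tendsto_of_tendsto' (((continuous_infDist_pt K).tendsto x).comp hx) hlim
      fun n => hbound n i
  exact (hK.mem_iff_infDist_zero hne).2 (le_antisymm hx0 infDist_nonneg)

theorem exists_tendsto_ifsIter (hf : ∀ j, LipschitzWith ρ (f j)) (hρ : ρ < 1) {K : Set ℝ}
    (hKb : Bornology.IsBounded K) (hK : K ⊆ ⋃ j, f j '' K) {x : ℝ} (hx : x ∈ K) :
    ∃ i, Tendsto (ifsIter m f i) atTop (𝓝 x) := by
  have hpre : ∀ y : K, ∃ (j : Fin m) (z : K), f j z = y := fun y => by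
    obtain ⟨j, z, hz, hzy⟩ := mem_iUnion.1 (hK y.2)
    exact ⟨j, ⟨z, hz⟩, hzy⟩
  choose σ τ hστ using hpre
  obtain ⟨C, hC⟩ := hKb.exists_norm_le
  -- follow the backward orbit `y, τ y, τ (τ y), …` and record the map used at each step
  let code : K → ℕ → Fin m := fun y n => σ (τ^[n] y)
  have hcode : ∀ n (y : K), dist (ifsIter m f (code y) n) y ≤ ρ ^ n * C := by
    intro n
    induction n with
    | zero => intro y; simpa [ifsIter] using hC y y.2
    | succ n ih =>
      intro y
      have htail : (fun k => code y (k + 1)) = code (τ y) := by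
        funext k; simp [code, Function.iterate_succ_apply]
      calc dist (f (σ y) (ifsIter m f (fun k => code y (k + 1)) n)) y
          = dist (f (σ y) (ifsIter m f (code (τ y)) n)) (f (σ y) (τ y)) := by
            rw [htail, hστ]
        _ ≤ ρ * dist (ifsIter m f (code (τ y)) n) (τ y) := (hf _).dist_le_mul _ _
        _ ≤ ρ * (ρ ^ n * C) := by gcongr; exact ih _
        _ = ρ ^ (n + 1) * C := by ring
  refine ⟨code ⟨x, hx⟩, tendsto_iff_dist_tendsto_zero.2 ?_⟩
  refine squeeze_zero (fun _ => dist_nonneg) (fun n => hcode n ⟨x, hx⟩) ?_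
  simpa using (tendsto_pow_atTop_nhds_zero_of_lt_one ρ.2 hρ).mul_const C

theorem range_eq_of_tendsto_ifsIter (hf : ∀ j, LipschitzWith ρ (f j)) (hρ : ρ < 1)
    {K : Set ℝ} (hK : IsCompact K) (hne : K.Nonempty) (hattr : K = ⋃ j, f j '' K)
    (hproj : ∀ i, Tendsto (ifsIter m f i) atTop (𝓝 (proj i))) : range proj = K := by
  refine Subset.antisymm (range_subset_iff.2 fun i => ?_) fun x hx => ?_
  · exact mem_of_tendsto_ifsIter hf hρ hK.isClosed hne (mapsTo_of_eq_iUnion_image hattr)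
      (hproj i)
  · obtain ⟨i, hi⟩ := exists_tendsto_ifsIter hf hρ hK.isBounded hattr.subset hx
    exact ⟨i, tendsto_nhds_unique (hproj i) hi⟩

variable (hrel : ∀ i, proj i = f i.head (proj i.tail))
include hrel

theorem proj_drop_eq (n : ℕ) (i : Stream' (Fin m)) :
    proj (i.drop n) = f (i.get n) (proj (i.drop (n + 1))) := by
  rw [hrel (i.drop n), Stream'.tail_drop', Stream'.head_drop]

theorem proj_append_congr (l : List (Fin m)) {s s' : Stream' (Fin m)} (h : proj s = proj s') :
    proj (l ++ₛ s) = proj (l ++ₛ s') := by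
  induction l with
  | nil => exact h
  | cons a l ih => rw [hrel (a :: l ++ₛ s), hrel (a :: l ++ₛ s')]; exact congrArg (f a) ih

theorem dist_proj_append_le (hf : ∀ j, LipschitzWith ρ (f j)) (l : List (Fin m))
    (s s' : Stream' (Fin m)) :
    dist (proj (l ++ₛ s)) (proj (l ++ₛ s')) ≤ ρ ^ l.length * dist (proj s) (proj s') := by
  induction l with
  | nil => simp [Stream'.nil_append_stream]
  | cons a l ih =>
    rw [hrel (a :: l ++ₛ s), hrel (a :: l ++ₛ s')]
    calc dist (f a (proj (l ++ₛ s))) (f a (proj (l ++ₛ s')))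
        ≤ ρ * dist (proj (l ++ₛ s)) (proj (l ++ₛ s')) := (hf a).dist_le_mul _ _
      _ ≤ ρ * (ρ ^ l.length * dist (proj s) (proj s')) := by gcongr
      _ = ρ ^ (a :: l).length * dist (proj s) (proj s') := by simp [pow_succ]; ring

theorem exists_forall_dist_proj_lt (hf : ∀ j, LipschitzWith ρ (f j)) (hρ : ρ < 1)
    (hbdd : Bornology.IsBounded (range proj)) {ε : ℝ} (hε : 0 < ε) :
    ∃ L, ∀ i i' : Stream' (Fin m), (∀ k < L, i.get k = i'.get k) →
      dist (proj i) (proj i') < ε := by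
  obtain ⟨L, hL⟩ :=
    exists_pow_lt_of_lt_one (div_pos hε (by positivity : 0 < diam (range proj) + 1)) hρ
  refine ⟨L, fun i i' h => ?_⟩
  have htake : i.take L = i'.take L :=
    List.ext_getElem (by simp) fun k hk _ => by
      simp only [Stream'.take_get]; exact h k (by simpa using hk)
  rw [← Stream'.append_take_drop L i, ← Stream'.append_take_drop L i', htake]
  calc dist (proj (i'.take L ++ₛ i.drop L)) (proj (i'.take L ++ₛ i'.drop L))
      ≤ ρ ^ L * dist (proj (i.drop L)) (proj (i'.drop L)) := by
        simpa using dist_proj_append_le hrel hf (i'.take L) (i.drop L) (i'.drop L)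
    _ ≤ ρ ^ L * (diam (range proj) + 1) := by
        gcongr
        exact (dist_le_diam_of_mem hbdd ⟨_, rfl⟩ ⟨_, rfl⟩).trans (by linarith)
    _ < ε := (lt_div_iff₀ (by positivity)).1 (by exact_mod_cast hL)

end CodingMap

section UniqueCodings

variable {m : ℕ} {f : Fin m → ℝ → ℝ} {K : Set ℝ} {proj : Stream' (Fin m) → ℝ}

def overlapSet (f : Fin m → ℝ → ℝ) (K : Set ℝ) : Set ℝ :=
  {x | ∃ p q, p ≠ q ∧ x ∈ f p '' K ∧ x ∈ f q '' K}

def codingsAvoiding (proj : Stream' (Fin m) → ℝ) (S : Set ℝ) : Set (Stream' (Fin m)) :=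
  {i | ∀ n, proj (i.drop n) ∉ S}

theorem drop_mem_codingsAvoiding {S : Set ℝ} {i : Stream' (Fin m)}
    (hi : i ∈ codingsAvoiding proj S) (k : ℕ) : i.drop k ∈ codingsAvoiding proj S :=
  fun n => by rw [Stream'.drop_drop]; exact hi _

theorem overlapSet_subset (hmaps : ∀ j, MapsTo (f j) K K) : overlapSet f K ⊆ K := by
  rintro _ ⟨p, -, -, ⟨y, hy, rfl⟩, -⟩
  exact hmaps p hy

theorem overlapSet_eq_iUnion {s : ℕ} {ik jk : Fin s → Fin m} (hne : ∀ k, ik k ≠ jk k)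
    {H : Fin s → Set ℝ} (hH : ∀ k, f (ik k) '' K ∩ f (jk k) '' K = H k)
    (hall : ∀ p q, p ≠ q → (f p '' K ∩ f q '' K).Nonempty →
      ∃ k, (p = ik k ∧ q = jk k) ∨ (p = jk k ∧ q = ik k)) :
    overlapSet f K = ⋃ k, H k := by
  ext x
  simp only [overlapSet, mem_iUnion]
  constructor
  · rintro ⟨p, q, hpq, hp, hq⟩
    obtain ⟨k, ⟨rfl, rfl⟩ | ⟨rfl, rfl⟩⟩ := hall p q hpq ⟨x, hp, hq⟩
    · exact ⟨k, hH k ▸ ⟨hp, hq⟩⟩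
    · exact ⟨k, hH k ▸ ⟨hq, hp⟩⟩
  · rintro ⟨k, hk⟩
    rw [← hH k] at hk
    exact ⟨ik k, jk k, hne k, hk⟩

theorem existsUnique_tendsto_ifsIter_iff
    (hproj : ∀ i, Tendsto (ifsIter m f i) atTop (𝓝 (proj i))) (i : Stream' (Fin m)) :
    (∃! j : ℕ → Fin m, Tendsto (ifsIter m f j) atTop (𝓝 (proj i))) ↔
      ∀ j, proj j = proj i → j = i := by
  have hlim : ∀ j, Tendsto (ifsIter m f j) atTop (𝓝 (proj i)) ↔ proj j = proj i :=
    fun j => ⟨tendsto_nhds_unique (hproj j), fun h => h ▸ hproj j⟩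
  simp only [hlim]
  exact ⟨fun ⟨_, _, huniq⟩ j hj => (huniq j hj).trans (huniq i rfl).symm,
    fun h => ⟨i, rfl, h⟩⟩

variable (hrel : ∀ i, proj i = f i.head (proj i.tail)) (hmem : ∀ i, proj i ∈ K)
include hrel hmem

theorem proj_mem_image_head (i : Stream' (Fin m)) : proj i ∈ f i.head '' K :=
  ⟨_, hmem _, (hrel i).symm⟩

theorem forall_proj_eq_imp_eq_iff (hinj : ∀ j, Function.Injective (f j)) (hsurj : K ⊆ range proj)
    (i : Stream' (Fin m)) :
    (∀ j, proj j = proj i → j = i) ↔ i ∈ codingsAvoiding proj (overlapSet f K) := by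
  constructor
  · rintro huniq n ⟨p, q, hpq, hp, hq⟩
    obtain ⟨a, ha, y, hy, hya⟩ : ∃ a, a ≠ i.get n ∧ proj (i.drop n) ∈ f a '' K := by
      by_cases hp' : p = i.get n
      exacts [⟨q, hp' ▸ hpq.symm, hq⟩, ⟨p, hp', hp⟩]
    obtain ⟨t, rfl⟩ := hsurj hy
    have hj := huniq (i.take n ++ₛ (Stream'.cons a t)) <| by
      conv_rhs => rw [← Stream'.append_take_drop n i]
      exact proj_append_congr hrel _ (by rw [hrel (Stream'.cons a t)]; exact hya)
    apply ha
    rw [← hj]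
    simpa using (Stream'.get_append_length (i.take n) (Stream'.cons a t)).symm
  · intro hav j hj
    have hstep : ∀ n, proj (j.drop n) = proj (i.drop n) →
        j.get n = i.get n ∧ proj (j.drop (n + 1)) = proj (i.drop (n + 1)) := by
      intro n hn
      have hi := proj_drop_eq hrel n i
      have hj := proj_drop_eq hrel n j
      have hji : j.get n = i.get n := by
        by_contra hne
        exact hav n
          ⟨j.get n, i.get n, hne, hn ▸ ⟨_, hmem _, hj.symm⟩, ⟨_, hmem _, hi.symm⟩⟩
      exact ⟨hji, hinj _ (by rw [← hj, hji, ← hi, hn])⟩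
    have hdrop : ∀ n, proj (j.drop n) = proj (i.drop n) := by
      intro n
      induction n with
      | zero => exact hj
      | succ n ih => exact (hstep n ih).2
    exact Stream'.ext fun n => (hstep n (hdrop n)).1

theorem preimage_univoque_eq_codingsAvoiding
    (hproj : ∀ i, Tendsto (ifsIter m f i) atTop (𝓝 (proj i)))
    (hinj : ∀ j, Function.Injective (f j)) (hsurj : K ⊆ range proj) :
    proj ⁻¹' {x | x ∈ K ∧ ∃! i : ℕ → Fin m, Tendsto (ifsIter m f i) atTop (𝓝 x)} =
      codingsAvoiding proj (overlapSet f K) := by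
  ext i
  rw [mem_preimage, mem_ofPred_eq, and_iff_right (hmem i)]
  exact (existsUnique_tendsto_ifsIter_iff hproj i).trans
    (forall_proj_eq_imp_eq_iff hrel hmem hinj hsurj i)

end UniqueCodings

section SwitchRegions

variable {m : ℕ} {f T : Fin m → ℝ → ℝ} {K : Set ℝ} {proj : Stream' (Fin m) → ℝ}

theorem mem_interior_of_invIterWord_mem (hfT : ∀ j x, f j (T j x) = x)
    (hTf : ∀ j x, T j (f j x) = x) (hT : ∀ j, Continuous (T j))
    (hmaps : ∀ j, MapsTo (f j) K K) (w : List (Fin m)) {y : ℝ}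
    (hy : invIterWord m T w y ∈ interior K) : y ∈ interior K := by
  induction w generalizing y with
  | nil => exact hy
  | cons a w ih =>
    have hopen : IsOpenMap (f a) := IsOpenMap.of_inverse (hT a) (hfT a) (hTf a)
    rw [← hfT a y]
    exact interior_mono (hmaps a).image_subset
      (hopen.image_interior_subset K ⟨_, ih hy, rfl⟩)

theorem compl_image_codingsAvoiding_mem_nhds (hfT : ∀ j x, f j (T j x) = x)
    (hTf : ∀ j x, T j (f j x) = x) (hT : ∀ j, Continuous (T j))
    (hmaps : ∀ j, MapsTo (f j) K K) (hrel : ∀ i, proj i = f i.head (proj i.tail))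
    (hmem : ∀ i, proj i ∈ K) (w : List (Fin m)) {e : ℝ}
    (he : invIterWord m T w e ∈ interior (overlapSet f K)) :
    (proj '' codingsAvoiding proj (overlapSet f K))ᶜ ∈ 𝓝 e := by
  induction w generalizing e with
  | nil =>
    filter_upwards [mem_interior_iff_mem_nhds.1 he]
    rintro _ hx ⟨t, ht, rfl⟩
    exact ht 0 hx
  | cons a w ih =>
    have hTe : T a e ∈ interior K := mem_interior_of_invIterWord_mem hfT hTf hT hmaps w
      (interior_mono (overlapSet_subset hmaps) he)
    filter_upwards [(hT a).continuousAt.preimage_mem_nhds (isOpen_interior.mem_nhds hTe),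
      (hT a).continuousAt.preimage_mem_nhds (ih he)]
    rintro _ hxK hxG ⟨t, ht, rfl⟩
    -- off the overlap set, the interval containing `proj t` determines the first letter of `t`
    have hhead : t.head = a := by
      by_contra hne
      exact ht 0 ⟨t.head, a, hne, proj_mem_image_head hrel hmem t,
        ⟨_, interior_subset hxK, hfT a _⟩⟩
    refine hxG ⟨t.tail, Stream'.tail_eq_drop t ▸ drop_mem_codingsAvoiding ht 1, ?_⟩
    rw [hrel t, hhead, hTf]

theorem exists_invIterWord_mem_of_mem_Icc {a b x : ℝ} {V : Set ℝ} (hV : Ioo a b ⊆ V)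
    (ha : ∃ w, invIterWord m T w a ∈ V) (hb : ∃ w, invIterWord m T w b ∈ V)
    (hx : x ∈ Icc a b) : ∃ w, invIterWord m T w x ∈ V := by
  rcases hx.1.eq_or_lt with rfl | hax
  · exact ha
  rcases hx.2.eq_or_lt with rfl | hxb
  · exact hb
  exact ⟨[], hV ⟨hax, hxb⟩⟩

end SwitchRegions

def IsSubshiftOfFiniteType {m : ℕ} (X : Set (Stream' (Fin m))) : Prop :=
  ∃ (L : ℕ) (F : Finset (Fin L → Fin m)),
    X = {x | ∀ k : ℕ, (fun j : Fin L => x.get (k + j)) ∉ F}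

theorem isSubshiftOfFiniteType_codingsAvoiding {m : ℕ} {proj : Stream' (Fin m) → ℝ}
    {S : Set ℝ} (hS : IsCompact S)
    (hcyl : ∀ ε > 0, ∃ L, ∀ i i' : Stream' (Fin m), (∀ k < L, i.get k = i'.get k) →
      dist (proj i) (proj i') < ε)
    (hnhds : (proj '' codingsAvoiding proj S)ᶜ ∈ 𝓝ˢ S) :
    IsSubshiftOfFiniteType (codingsAvoiding proj S) := by
  classical
  obtain ⟨δ, hδ, hsub⟩ := (hasBasis_nhdsSet_thickening hS).mem_iff.1 hnhds
  obtain ⟨L, hL⟩ := hcyl δ hδ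
  refine ⟨L, Finset.univ.filter fun w =>
    ∀ t : Stream' (Fin m), (∀ p : Fin L, t.get p = w p) → t ∉ codingsAvoiding proj S, ?_⟩
  ext x
  simp only [Finset.mem_filter, Finset.mem_univ, true_and, mem_ofPred_eq]
  constructor
  · intro hx k hw
    exact hw (x.drop k) (fun p => by simp [Stream'.get_drop])
      (drop_mem_codingsAvoiding hx k)
  · intro hx n hn
    refine hx n fun t ht htX => hsub (mem_thickening_iff.2 ⟨_, hn, hL t (x.drop n)
      fun k hk => ?_⟩) ⟨t, htX, rfl⟩
    simpa [Stream'.get_drop, add_comm] using ht ⟨k, hk⟩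

theorem stmt3_general (m : ℕ) (r c : Fin m → ℝ)
    (hr : ∀ j, 0 < r j ∧ r j < 1)
    (f : Fin m → ℝ → ℝ) (hf : ∀ j x, f j x = r j * x + c j)
    (T : Fin m → ℝ → ℝ) (hT : ∀ j x, T j x = (x - c j) / r j)
    (A B : ℝ) (hAB : A < B)
    (K : Set ℝ) (hK : K = Icc A B) (hKattr : K = ⋃ j, f j '' K)
    (proj : (ℕ → Fin m) → ℝ)
    (hproj : ∀ i : ℕ → Fin m, Tendsto (ifsIter m f i) atTop (𝓝 (proj i)))
    (U : Set ℝ)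
    (hU : U = {x | x ∈ K ∧ ∃! i : ℕ → Fin m, Tendsto (ifsIter m f i) atTop (𝓝 x)})
    (Ut : Set (ℕ → Fin m)) (hUt : Ut = proj ⁻¹' U)
    -- the switch regions: exactly `s` pairs of first-level intervals intersect,
    -- each intersection `H_k = [a_k, b_k]` is a nondegenerate interval in the
    -- interior of `K`, and the `H_k` are pairwise disjoint
    (s : ℕ)
    (ik jk : Fin s → Fin m) (hkne : ∀ k, ik k ≠ jk k)
    (aH bH : Fin s → ℝ)
    (hH : ∀ k, f (ik k) '' K ∩ f (jk k) '' K = Icc (aH k) (bH k))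
    (hcomplete : ∀ p q : Fin m, p ≠ q → (f p '' K ∩ f q '' K).Nonempty →
      ∃ k, (p = ik k ∧ q = jk k) ∨ (p = jk k ∧ q = ik k))
    -- the hypothesis of Theorem 4: both endpoints of every switch region are
    -- eventually mapped into the union of the interiors of the switch regions
    (hyp : ∀ k : Fin s,
      (∃ w : List (Fin m), invIterWord m T w (aH k) ∈ ⋃ i, Ioo (aH i) (bH i)) ∧
      (∃ w : List (Fin m), invIterWord m T w (bH k) ∈ ⋃ i, Ioo (aH i) (bH i))) :
    ∃ (L : ℕ) (F : Finset (Fin L → Fin m)),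
      Ut = {x : ℕ → Fin m | ∀ k : ℕ, (fun j : Fin L => x (k + j)) ∉ F} := by
  have hfT : ∀ j x, f j (T j x) = x := fun j x => by
    rw [hf, hT]; field_simp [(hr j).1.ne']; ring
  have hTf : ∀ j x, T j (f j x) = x := fun j x => by
    rw [hf, hT]; field_simp [(hr j).1.ne']; ring
  have hTc : ∀ j, Continuous (T j) := fun j => by
    rw [show T j = fun x => (x - c j) / r j from funext (hT j)]; fun_prop
  obtain ⟨ρ, hρ, hlip⟩ := exists_lipschitzWith_lt_one_of_affine hr hf
  have hmaps := mapsTo_of_eq_iUnion_image hKattr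
  have hrel := proj_eq_apply_proj_tail (fun j => (hlip j).continuous) hproj
  have hKc : IsCompact K := hK ▸ isCompact_Icc
  have hrange : range proj = K :=
    range_eq_of_tendsto_ifsIter hlip hρ hKc (hK ▸ nonempty_Icc.2 hAB.le) hKattr hproj
  have hmem : ∀ i, proj i ∈ K := fun i => hrange ▸ mem_range_self i
  have hS := overlapSet_eq_iUnion hkne hH hcomplete
  have hUt' : Ut = codingsAvoiding proj (overlapSet f K) := by
    rw [hUt, hU]
    exact preimage_univoque_eq_codingsAvoiding hrel hmem hproj
      (fun j => Function.LeftInverse.injective (hTf j)) hrange.ge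
  have hnhds : ∀ e ∈ overlapSet f K,
      (proj '' codingsAvoiding proj (overlapSet f K))ᶜ ∈ 𝓝 e := by
    intro e he
    obtain ⟨k, hek⟩ := mem_iUnion.1 (hS ▸ he)
    obtain ⟨w, hw⟩ := exists_invIterWord_mem_of_mem_Icc
      (subset_iUnion (fun i => Ioo (aH i) (bH i)) k) (hyp k).1 (hyp k).2 hek
    refine compl_image_codingsAvoiding_mem_nhds hfT hTf hTc hmaps hrel hmem w ?_
    exact interior_maximal (hS ▸ iUnion_mono fun _ => Ioo_subset_Icc_self)
      (isOpen_iUnion fun _ => isOpen_Ioo) hw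
  rw [hUt']
  exact isSubshiftOfFiniteType_codingsAvoiding (hS ▸ isCompact_iUnion fun _ => isCompact_Icc)
    (fun ε hε => exists_forall_dist_proj_lt hrel hlip hρ (hrange ▸ hKc.isBounded) hε)
    (mem_nhdsSet_iff_forall.2 hnhds)

/-- if every endpoint of every switch region can be mapped by a finite
composition of the inverse maps into the interior of some switch region, then the set
of unique codings `Ũ` is a subshift of finite type. -/
theorem stmt3 (m : ℕ) (hm : 2 ≤ m) (r c : Fin m → ℝ)
    (hr : ∀ j, 0 < r j ∧ r j < 1)
    (f : Fin m → ℝ → ℝ) (hf : ∀ j x, f j x = r j * x + c j)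
    (T : Fin m → ℝ → ℝ) (hT : ∀ j x, T j x = (x - c j) / r j)
    (A B : ℝ) (hAB : A < B)
    (K : Set ℝ) (hK : K = Icc A B) (hKattr : K = ⋃ j, f j '' K)
    (proj : (ℕ → Fin m) → ℝ)
    (hproj : ∀ i : ℕ → Fin m, Tendsto (ifsIter m f i) atTop (𝓝 (proj i)))
    (U : Set ℝ)
    (hU : U = {x | x ∈ K ∧ ∃! i : ℕ → Fin m, Tendsto (ifsIter m f i) atTop (𝓝 x)})
    (Ut : Set (ℕ → Fin m)) (hUt : Ut = proj ⁻¹' U)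
    -- the switch regions: exactly `s` pairs of first-level intervals intersect,
    -- each intersection `H_k = [a_k, b_k]` is a nondegenerate interval in the
    -- interior of `K`, and the `H_k` are pairwise disjoint
    (s : ℕ) (hs : 1 ≤ s)
    (ik jk : Fin s → Fin m) (hkne : ∀ k, ik k ≠ jk k)
    (aH bH : Fin s → ℝ)
    (hH : ∀ k, f (ik k) '' K ∩ f (jk k) '' K = Icc (aH k) (bH k))
    (hHnd : ∀ k, aH k < bH k)
    (hHint : ∀ k, Icc (aH k) (bH k) ⊆ Ioo A B)
    (hHdisj : ∀ k l, k ≠ l → Disjoint (Icc (aH k) (bH k)) (Icc (aH l) (bH l)))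
    (hcomplete : ∀ p q : Fin m, p ≠ q → (f p '' K ∩ f q '' K).Nonempty →
      ∃ k, (p = ik k ∧ q = jk k) ∨ (p = jk k ∧ q = ik k))
    -- the hypothesis of Theorem 4: both endpoints of every switch region are
    -- eventually mapped into the union of the interiors of the switch regions
    (hyp : ∀ k : Fin s,
      (∃ w : List (Fin m), invIterWord m T w (aH k) ∈ ⋃ i, Ioo (aH i) (bH i)) ∧
      (∃ w : List (Fin m), invIterWord m T w (bH k) ∈ ⋃ i, Ioo (aH i) (bH i))) :
    ∃ (L : ℕ) (F : Finset (Fin L → Fin m)),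
      Ut = {x : ℕ → Fin m | ∀ k : ℕ, (fun j : Fin L => x (k + j)) ∉ F} :=
  stmt3_general m r c hr f hf T hT A B hAB K hK hKattr proj hproj U hU Ut hUt s ik jk hkne aH bH hH
    hcomplete hyp
end

section
/- For Lebesgue-almost every x ∈ K there exist N ≥ 1, a finite word (i_1,…,i_N) ∈ {1,…,m}^N, and k ∈ {1,…,s} such that T_{i_1…i_N}(x) lies in the open interval (a_k, b_k), the interior of the switch region H_k. -/
/-!
Let `G ⊆ K` be the set of points none of whose nonempty inverse orbits enters the interior of a
switch region. If `x = f_w y` lies in `G` then so does `y`, hence `G ∩ f_w K ⊆ f_w G` for every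
word `w`, and as `f_w` is affine the density of `G` in every cylinder `f_w K` is at most
`|G| / |K|`. This ratio is `< 1` because `G` misses `f_j (a_k, b_k)`. The cylinders through a
point shrink to it, so by Lebesgue's density theorem (with moving centres) no point of `K` is a
density point of `G`, and `|G| = 0`.
-/

open Filter Topology Set MeasureTheory

open Metric Pointwise

def composeWord {ι α : Type*} (f : ι → α → α) (w : List ι) (x : α) : α :=
  w.foldr f x

section Words

variable {ι α : Type*}

theorem composeWord_cons (f : ι → α → α) (j : ι) (w : List ι) (x : α) :
    composeWord f (j :: w) x = f j (composeWord f w x) :=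
  rfl

theorem exists_length_eq_mem_image_composeWord {f : ι → α → α} {K : Set α}
    (hK : K = ⋃ j, f j '' K) (n : ℕ) {x : α} (hx : x ∈ K) :
    ∃ w : List ι, w.length = n ∧ x ∈ composeWord f w '' K := by
  induction n generalizing x with
  | zero => exact ⟨[], rfl, x, hx, rfl⟩
  | succ n ih =>
    rw [hK] at hx
    obtain ⟨j, y, hy, rfl⟩ := mem_iUnion.1 hx
    obtain ⟨w, hw, z, hz, rfl⟩ := ih hy
    exact ⟨j :: w, by simp [hw], z, hz, rfl⟩

theorem invIterWord_append {m : ℕ} (T : Fin m → ℝ → ℝ) (w w' : List (Fin m)) (x : ℝ) :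
    invIterWord m T (w ++ w') x = invIterWord m T w' (invIterWord m T w x) :=
  List.foldl_append

theorem invIterWord_composeWord {m : ℕ} {T f : Fin m → ℝ → ℝ}
    (hTf : ∀ j, Function.LeftInverse (T j) (f j)) (w : List (Fin m)) (x : ℝ) :
    invIterWord m T w (composeWord f w x) = x := by
  induction w with
  | nil => rfl
  | cons j w ih => exact (congrArg (invIterWord m T w) (hTf j _)).trans ih

theorem sep_inter_image_composeWord_subset {m : ℕ} {T f : Fin m → ℝ → ℝ}
    (hTf : ∀ j, Function.LeftInverse (T j) (f j)) (K O : Set ℝ) (w : List (Fin m)) :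
    {x ∈ K | ∀ v ≠ [], invIterWord m T v x ∉ O} ∩ composeWord f w '' K ⊆
      composeWord f w '' {x ∈ K | ∀ v ≠ [], invIterWord m T v x ∉ O} := by
  rintro x ⟨⟨-, hx⟩, y, hy, rfl⟩
  refine ⟨y, ⟨hy, fun v hv => ?_⟩, rfl⟩
  rw [← invIterWord_composeWord hTf w y, ← invIterWord_append]
  exact hx _ (List.append_ne_nil_of_right_ne_nil _ hv)

end Words

section Affine

variable {ι : Type*} {r c : ι → ℝ} {f : ι → ℝ → ℝ}

theorem composeWord_eq_affine (hf : ∀ j x, f j x = r j * x + c j) (w : List ι) :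
    composeWord f w = fun x => (w.map r).prod * x + composeWord f w 0 := by
  induction w with
  | nil => funext x; simp [composeWord]
  | cons j w ih =>
    funext x
    rw [composeWord_cons, composeWord_cons, hf, hf, ih]
    simp only [List.map_cons, List.prod_cons]
    ring

theorem prod_map_pos (hr : ∀ j, 0 < r j) (w : List ι) : 0 < (w.map r).prod :=
  List.prod_pos fun _ hx => by
    obtain ⟨j, -, rfl⟩ := List.mem_map.1 hx
    exact hr j

theorem image_composeWord_closedBall (hf : ∀ j x, f j x = r j * x + c j) (hr : ∀ j, 0 < r j)
    (w : List ι) (z ρ : ℝ) :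
    composeWord f w '' closedBall z ρ = closedBall (composeWord f w z) ((w.map r).prod * ρ) := by
  rw [composeWord_eq_affine hf, Real.closedBall_eq_Icc, Real.closedBall_eq_Icc,
    image_affine_Icc' (prod_map_pos hr w)]
  congr 1 <;> ring

theorem volume_image_composeWord (hf : ∀ j x, f j x = r j * x + c j) (hr : ∀ j, 0 < r j)
    (w : List ι) (S : Set ℝ) :
    volume (composeWord f w '' S) = ENNReal.ofReal (w.map r).prod * volume S := by
  have himage : composeWord f w '' S = composeWord f w 0 +ᵥ (w.map r).prod • S := by
    rw [composeWord_eq_affine hf, ← image_smul, ← image_vadd, image_image]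
    simp only [smul_eq_mul, vadd_eq_add, add_comm, mul_zero, zero_add]
  rw [himage, measure_vadd, Measure.addHaar_smul_of_nonneg volume (prod_map_pos hr w).le,
    Module.finrank_self, pow_one]

theorem tendsto_prod_map_nhdsGT_zero [Finite ι] (hr : ∀ j, 0 < r j ∧ r j < 1)
    (w : ℕ → List ι) (hw : ∀ n, (w n).length = n) :
    Tendsto (fun n => ((w n).map r).prod) atTop (𝓝[>] 0) := by
  obtain ⟨ρ, hρ0, hρ1, hrρ⟩ : ∃ ρ : ℝ, 0 ≤ ρ ∧ ρ < 1 ∧ ∀ j, r j ≤ ρ := by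
    cases isEmpty_or_nonempty ι
    · exact ⟨0, le_rfl, zero_lt_one, isEmptyElim⟩
    · obtain ⟨j₀, hj₀⟩ := Finite.exists_max r
      exact ⟨r j₀, (hr j₀).1.le, (hr j₀).2, hj₀⟩
  refine tendsto_nhdsWithin_iff.2 ⟨?_, .of_forall fun n => prod_map_pos (fun j => (hr j).1) _⟩
  refine squeeze_zero (fun n => (prod_map_pos (fun j => (hr j).1) _).le) (fun n => ?_)
    (tendsto_pow_atTop_nhds_zero_of_lt_one hρ0 hρ1)
  calc ((w n).map r).prod ≤ ((w n).map fun _ => ρ).prod :=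
        List.prod_map_le_prod_map₀ _ _ (fun j _ => (hr j).1.le) fun j _ => hrρ j
    _ = ρ ^ n := by simp [hw n]

end Affine

theorem measure_lt_of_subset_of_disjoint {α : Type*} [MeasurableSpace α] {μ : Measure α}
    {s t u : Set α} (hst : s ⊆ t) (hut : u ⊆ t) (hsu : Disjoint s u) (hu : MeasurableSet u)
    (hu₀ : μ u ≠ 0) (ht : μ t ≠ ⊤) : μ s < μ t :=
  calc μ s ≤ μ (t \ u) := measure_mono (subset_sdiff.2 ⟨hst, hsu⟩)
    _ = μ t - μ u := measure_sdiff hut hu.nullMeasurableSet (measure_ne_top_of_subset hut ht)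
    _ < μ t := ENNReal.sub_lt_self ht (fun h => hu₀ (measure_mono_null hut h)) hu₀

theorem volume_eq_zero_of_inter_image_composeWord_subset {ι : Type*} [Finite ι] {r c : ι → ℝ}
    {f : ι → ℝ → ℝ} (hr : ∀ j, 0 < r j ∧ r j < 1) (hf : ∀ j x, f j x = r j * x + c j)
    {A B : ℝ} (hAB : A < B) (hK : Icc A B = ⋃ j, f j '' Icc A B)
    {F : Set ℝ} (hFK : F ⊆ Icc A B) (hlt : volume F < volume (Icc A B))
    (hcyl : ∀ w, F ∩ composeWord f w '' Icc A B ⊆ composeWord f w '' F) :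
    volume F = 0 := by
  rw [Real.Icc_eq_closedBall] at hK hFK hlt hcyl
  set z := (A + B) / 2
  set ρ := (B - A) / 2
  have hρ : 0 < ρ := half_pos (sub_pos.2 hAB)
  have hr₀ : ∀ j, 0 < r j := fun j => (hr j).1
  by_contra hF
  have : (ae (volume.restrict F)).NeBot := ae_neBot.2 (Measure.restrict_eq_zero.not.2 hF)
  obtain ⟨x₀, hx₀K, hx₀⟩ := ((ae_restrict_of_ae_restrict_of_subset hFK
    (ae_restrict_mem measurableSet_closedBall)).and
    (IsUnifLocDoublingMeasure.ae_tendsto_measure_inter_div volume F 1)).exists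
  choose w hw hx₀w using fun n => exists_length_eq_mem_image_composeWord hK n hx₀K
  have hcyl_ratio : ∀ n, volume (F ∩ composeWord f (w n) '' closedBall z ρ) /
      volume (composeWord f (w n) '' closedBall z ρ) ≤ volume F / volume (closedBall z ρ) := by
    intro n
    have hP := ENNReal.ofReal_pos.2 (prod_map_pos hr₀ (w n))
    calc _ ≤ volume (composeWord f (w n) '' F) / volume (composeWord f (w n) '' closedBall z ρ) := by
          gcongr
          exact hcyl (w n)
      _ = volume F / volume (closedBall z ρ) := by
          rw [volume_image_composeWord hf hr₀, volume_image_composeWord hf hr₀,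
            ENNReal.mul_div_mul_left _ _ hP.ne' ENNReal.ofReal_ne_top]
  simp only [image_composeWord_closedBall hf hr₀] at hcyl_ratio hx₀w
  have hradius : Tendsto (fun n => ((w n).map r).prod * ρ) atTop (𝓝[>] 0) := by
    have := tendsto_prod_map_nhdsGT_zero hr w hw
    rw [← comap_mulLeft_nhdsGT_zero hρ, tendsto_comap_iff] at this
    simpa only [Function.comp_def, mul_comm ρ] using this
  have hone := le_of_tendsto' (hx₀ _ _ hradius (.of_forall fun n => by simpa using hx₀w n))
    hcyl_ratio
  exact hone.not_gt (ENNReal.div_lt_of_lt_mul (by rwa [one_mul]))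

theorem stmt4_general (m : ℕ) (hm : 2 ≤ m) (r c : Fin m → ℝ)
    (hr : ∀ j, 0 < r j ∧ r j < 1)
    (f : Fin m → ℝ → ℝ) (hf : ∀ j x, f j x = r j * x + c j)
    (T : Fin m → ℝ → ℝ) (hT : ∀ j x, T j x = (x - c j) / r j)
    (A B : ℝ) (hAB : A < B)
    (K : Set ℝ) (hK : K = Icc A B) (hKattr : K = ⋃ j, f j '' K)
    (s : ℕ) (hs : 1 ≤ s)
    (aH bH : Fin s → ℝ)
    (hHnd : ∀ k, aH k < bH k)
    (hHint : ∀ k, Icc (aH k) (bH k) ⊆ Ioo A B) :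
    ∀ᵐ x ∂(volume : Measure ℝ), x ∈ K →
      ∃ w : List (Fin m), w ≠ [] ∧ ∃ k : Fin s,
        invIterWord m T w x ∈ Ioo (aH k) (bH k) := by
  obtain ⟨j₀, k₀⟩ : Fin m × Fin s := (⟨0, by omega⟩, ⟨0, hs⟩)
  subst hK
  have hTf : ∀ j, Function.LeftInverse (T j) (f j) := fun j x => by
    rw [hT, hf, add_sub_cancel_right, mul_div_cancel_left₀ _ (hr j).1.ne']
  set G := {x ∈ Icc A B | ∀ w ≠ [], invIterWord m T w x ∉ ⋃ k, Ioo (aH k) (bH k)}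
  have hU : f j₀ '' Ioo (aH k₀) (bH k₀) = Ioo (r j₀ * aH k₀ + c j₀) (r j₀ * bH k₀ + c j₀) := by
    rw [show f j₀ = fun x => r j₀ * x + c j₀ from funext (hf j₀)]
    exact image_affine_Ioo (hr j₀).1 _ _ _
  have hlt : volume G < volume (Icc A B) := by
    refine measure_lt_of_subset_of_disjoint (sep_subset _ _) ?_ ?_ (hU ▸ measurableSet_Ioo) ?_
      measure_Icc_lt_top.ne
    · refine (image_mono ?_).trans (hKattr.symm ▸ subset_iUnion (fun j => f j '' Icc A B) j₀)
      exact Ioo_subset_Icc_self.trans ((hHint k₀).trans Ioo_subset_Icc_self)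
    · rw [disjoint_left]
      rintro x ⟨-, hx⟩ ⟨y, hy, rfl⟩
      have hy' : invIterWord m T [j₀] (f j₀ y) = y := hTf j₀ y
      exact hx [j₀] (List.cons_ne_nil _ _) (mem_iUnion.2 ⟨k₀, by rwa [hy']⟩)
    · simpa [hU, Real.volume_Ioo] using mul_lt_mul_of_pos_left (hHnd k₀) (hr j₀).1
  have hG₀ := volume_eq_zero_of_inter_image_composeWord_subset hr hf hAB hKattr
    (sep_subset _ _) hlt (sep_inter_image_composeWord_subset hTf _ _)
  refine ae_iff.2 (measure_mono_null (fun x hx => ?_) hG₀)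
  simpa [G, and_assoc] using hx

/-- for Lebesgue-almost every `x ∈ K` some finite composition of the
inverse maps sends `x` into the interior of a switch region. -/
theorem stmt4 (m : ℕ) (hm : 2 ≤ m) (r c : Fin m → ℝ)
    (hr : ∀ j, 0 < r j ∧ r j < 1)
    (f : Fin m → ℝ → ℝ) (hf : ∀ j x, f j x = r j * x + c j)
    (T : Fin m → ℝ → ℝ) (hT : ∀ j x, T j x = (x - c j) / r j)
    (A B : ℝ) (hAB : A < B)
    (K : Set ℝ) (hK : K = Icc A B) (hKattr : K = ⋃ j, f j '' K)
    (s : ℕ) (hs : 1 ≤ s)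
    (ik jk : Fin s → Fin m) (hkne : ∀ k, ik k ≠ jk k)
    (aH bH : Fin s → ℝ)
    (hH : ∀ k, f (ik k) '' K ∩ f (jk k) '' K = Icc (aH k) (bH k))
    (hHnd : ∀ k, aH k < bH k)
    (hHint : ∀ k, Icc (aH k) (bH k) ⊆ Ioo A B)
    (hHdisj : ∀ k l, k ≠ l → Disjoint (Icc (aH k) (bH k)) (Icc (aH l) (bH l)))
    (hcomplete : ∀ p q : Fin m, p ≠ q → (f p '' K ∩ f q '' K).Nonempty →
      ∃ k, (p = ik k ∧ q = jk k) ∨ (p = jk k ∧ q = ik k)) :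
    ∀ᵐ x ∂(volume : Measure ℝ), x ∈ K →
      ∃ w : List (Fin m), w ≠ [] ∧ ∃ k : Fin s,
        invIterWord m T w x ∈ Ioo (aH k) (bH k) :=
  stmt4_general m hm r c hr f hf T hT A B hAB K hK hKattr s hs aH bH hHnd hHint
end
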